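/- Let G = ⟨N, E, λ_N, λ_E⟩ be a graph with N finite and k ≥ 0. For all nodes u, v ∈ N: u and v are Paige-Tarjan k-bisimilar (i.e., they lie in a common block of the k-partition of G) if and only if u ≈^k v. -/

import Mathlib

/-- A finite directed node- and edge-labeled graph `G = ⟨N, E, λ_N, λ_E⟩`:
`V` is the type of nodes, `edge u v` means `(u,v) ∈ E`, `nodeLabel` is `λ_N`,
and `edgeLabel` is `λ_E`. -/
structure LGraph (V LN LE : Type*) where
  edge : V → V → Prop
  nodeLabel : V → LN
  edgeLabel : V → V → LE

variable {V LN LE : Type*}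

/-- `kbisim G k u v` means `u ≈^k v`: nodes `u` and `v` are `k`-bisimilar. -/
def kbisim (G : LGraph V LN LE) : ℕ → V → V → Prop
  | 0, u, v => G.nodeLabel u = G.nodeLabel v
  | k+1, u, v => G.nodeLabel u = G.nodeLabel v ∧
      (∀ u', G.edge u u' → ∃ v', G.edge v v' ∧ kbisim G k u' v' ∧
        G.edgeLabel u u' = G.edgeLabel v v') ∧
      (∀ v', G.edge v v' → ∃ u', G.edge u u' ∧ kbisim G k v' u' ∧
        G.edgeLabel v v' = G.edgeLabel u u')

/-- `parents G ℓ J` is the set of nodes having an `ℓ`-labeled edge into the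
set `J`. -/
def parents (G : LGraph V LN LE) (ℓ : LE) (J : Set V) : Set V :=
  {y | ∃ x ∈ J, G.edge y x ∧ G.edgeLabel y x = ℓ}

/-- Partition `I` refines partition `J`: every block of `I` is contained in
some block of `J`. -/
def Refines (I J : Set (Set V)) : Prop := ∀ s ∈ I, ∃ t ∈ J, s ⊆ t

/-- Partition `I` is stable with respect to partition `J`: for every block
`s ∈ I`, every block `t ∈ J` and every edge label `ℓ`, either
`s ⊆ parents_ℓ(t)` or `s ∩ parents_ℓ(t) = ∅`. -/
def Stable (G : LGraph V LN LE) (I J : Set (Set V)) : Prop :=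
  ∀ s ∈ I, ∀ t ∈ J, ∀ ℓ : LE, s ⊆ parents G ℓ t ∨ s ∩ parents G ℓ t = ∅

/-- `IsKPartition G k I` means `I` is the `k`-partition of `G`: for `k = 0`,
`I` is the partition of the nodes by node labels; for `k > 0`, `I` is a
smallest-cardinality partition of the nodes such that there is a
`(k-1)`-partition `J` of `G` with `I` refining `J` and stable with respect
to `J`. -/
def IsKPartition (G : LGraph V LN LE) : ℕ → Set (Set V) → Prop
  | 0, I => I = {s | ∃ u : V, s = {v | G.nodeLabel v = G.nodeLabel u}}
  | k+1, I => Setoid.IsPartition I ∧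
      (∃ J, IsKPartition G k J ∧ Refines I J ∧ Stable G I J) ∧
      ∀ I' : Set (Set V), Setoid.IsPartition I' →
        (∃ J, IsKPartition G k J ∧ Refines I' J ∧ Stable G I' J) →
        I.ncard ≤ I'.ncard

/-- Nodes `u` and `v` are Paige-Tarjan `k`-bisimilar: they lie in a common
block of the `k`-partition of `G`. -/
def ptBisim (G : LGraph V LN LE) (k : ℕ) (u v : V) : Prop :=
  ∃ I : Set (Set V), IsKPartition G k I ∧ ∃ B ∈ I, u ∈ B ∧ v ∈ B

/-!
The `k`-partition is unique: it is the set of `≈^k`-classes. Inductively, the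
`≈^(k+1)`-classes refine the `≈^k`-classes and are stable with respect to them.
Conversely, stability of a block `s` with respect to the class of `a'` along the label
of an edge `a → a'` with `a ∈ s` gives every `b ∈ s` a matching edge, so every
partition refining and stable with respect to the `≈^k`-classes refines the
`≈^(k+1)`-classes; on a finite node set it then has at least as many blocks, and as
many only if it equals them.
-/

namespace Setoid

variable {α : Type*}

theorem ncard_classes (r : Setoid α) : r.classes.ncard = Nat.card (Quotient r) :=
  (Nat.card_congr r.quotientEquivClasses).symm

theorem map_of_le_surjective {r s : Setoid α} (h : r ≤ s) :
    Function.Surjective (map_of_le h) :=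
  Quotient.ind fun a => ⟨Quotient.mk r a, rfl⟩

theorem ncard_classes_le_of_le [Finite α] {r s : Setoid α} (h : r ≤ s) :
    s.classes.ncard ≤ r.classes.ncard := by
  simp only [ncard_classes]
  exact Nat.card_le_card_of_surjective _ (map_of_le_surjective h)

theorem eq_of_le_of_ncard_classes_le [Finite α] {r s : Setoid α} (h : r ≤ s)
    (hc : r.classes.ncard ≤ s.classes.ncard) : r = s := by
  rw [ncard_classes, ncard_classes] at hc
  have hinj := ((map_of_le_surjective h).bijective_of_nat_card_le hc).injective
  exact le_antisymm h fun x y hxy => Quotient.exact (hinj (Quotient.sound hxy :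
    map_of_le h (Quotient.mk r x) = map_of_le h (Quotient.mk r y)))

theorem refines_classes_of_le {r s : Setoid α} (h : r ≤ s) : Refines r.classes s.classes := by
  rintro _ ⟨y, rfl⟩
  exact ⟨{x | s x y}, s.mem_classes y, fun x hx => h hx⟩

end Setoid

section Bisimilarity

variable (G : LGraph V LN LE)

theorem kbisim_refl : ∀ (k : ℕ) (u : V), kbisim G k u u
  | 0, _ => rfl
  | k + 1, _ => ⟨rfl, fun u' h => ⟨u', h, kbisim_refl k u', rfl⟩,
      fun u' h => ⟨u', h, kbisim_refl k u', rfl⟩⟩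

variable {G}

theorem kbisim.nodeLabel_eq :
    ∀ {k : ℕ} {u v : V}, kbisim G k u v → G.nodeLabel u = G.nodeLabel v
  | 0, _, _, h => h
  | _ + 1, _, _, h => h.1

theorem kbisim.symm : ∀ {k : ℕ} {u v : V}, kbisim G k u v → kbisim G k v u
  | 0, _, _, h => Eq.symm h
  | _ + 1, _, _, ⟨hl, hf, hb⟩ => ⟨hl.symm, hb, hf⟩

theorem kbisim.trans : ∀ {k : ℕ} {u v w : V}, kbisim G k u v → kbisim G k v w → kbisim G k u w
  | 0, _, _, _, h₁, h₂ => Eq.trans h₁ h₂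
  | _ + 1, _, _, _, ⟨hl₁, hf₁, hb₁⟩, ⟨hl₂, hf₂, hb₂⟩ => by
    refine ⟨hl₁.trans hl₂, fun u' hu => ?_, fun w' hw => ?_⟩
    · obtain ⟨v', hv, hb, hl⟩ := hf₁ u' hu
      obtain ⟨w', hw, hb', hl'⟩ := hf₂ v' hv
      exact ⟨w', hw, hb.trans hb', hl.trans hl'⟩
    · obtain ⟨v', hv, hb, hl⟩ := hb₂ w' hw
      obtain ⟨u', hu, hb', hl'⟩ := hb₁ v' hv
      exact ⟨u', hu, hb.trans hb', hl.trans hl'⟩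

theorem kbisim.of_succ : ∀ {k : ℕ} {u v : V}, kbisim G (k + 1) u v → kbisim G k u v
  | 0, _, _, h => h.1
  | _ + 1, _, _, ⟨hl, hf, hb⟩ => by
    refine ⟨hl, fun u' hu => ?_, fun v' hv => ?_⟩
    · obtain ⟨v', hv, h, hl⟩ := hf u' hu
      exact ⟨v', hv, h.of_succ, hl⟩
    · obtain ⟨u', hu, h, hl⟩ := hb v' hv
      exact ⟨u', hu, h.of_succ, hl⟩

variable (G) in
def kbisimSetoid (k : ℕ) : Setoid V :=
  ⟨kbisim G k, ⟨kbisim_refl G k, kbisim.symm, kbisim.trans⟩⟩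

theorem kbisimSetoid_succ_le (k : ℕ) : kbisimSetoid G (k + 1) ≤ kbisimSetoid G k :=
  fun _ _ => kbisim.of_succ

theorem stable_kbisimSetoid_succ (k : ℕ) :
    Stable G (kbisimSetoid G (k + 1)).classes (kbisimSetoid G k).classes := by
  rintro _ ⟨y, rfl⟩ _ ⟨w, rfl⟩ ℓ
  refine or_iff_not_imp_right.2 fun hne x hx => ?_
  obtain ⟨z, ⟨hz, z', hz', hzz', hℓ⟩⟩ := Set.nonempty_iff_ne_empty.2 hne
  obtain ⟨x', hxx', hx'z', hℓ'⟩ := (hx.trans hz.symm).2.2 z' hzz'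
  exact ⟨x', hx'z'.symm.trans hz', hxx', hℓ'.symm.trans hℓ⟩

theorem Stable.exists_edge_of_mem {I : Set (Set V)} {k : ℕ}
    (hst : Stable G I (kbisimSetoid G k).classes) {s : Set V} (hs : s ∈ I) {a b : V}
    (ha : a ∈ s) (hb : b ∈ s) {a' : V} (ha' : G.edge a a') :
    ∃ b', G.edge b b' ∧ kbisim G k a' b' ∧ G.edgeLabel a a' = G.edgeLabel b b' := by
  have hpa : a ∈ parents G (G.edgeLabel a a') {z | kbisim G k z a'} :=
    ⟨a', kbisim_refl G k a', ha', rfl⟩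
  rcases hst s hs _ ((kbisimSetoid G k).mem_classes a') (G.edgeLabel a a') with hsub | hempty
  · obtain ⟨b', hb'a', hbb', hℓ⟩ := hsub hb
    exact ⟨b', hbb', hb'a'.symm, hℓ.symm⟩
  · exact absurd (Set.mem_inter ha hpa) (hempty ▸ Set.notMem_empty a)

theorem mkClasses_le_kbisimSetoid_succ {I : Set (Set V)} (hI : Setoid.IsPartition I) {k : ℕ}
    (href : Refines I (kbisimSetoid G k).classes) (hst : Stable G I (kbisimSetoid G k).classes) :
    Setoid.mkClasses I hI.2 ≤ kbisimSetoid G (k + 1) := by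
  intro x y hxy
  obtain ⟨s, ⟨hs, hx⟩, -⟩ := hI.2 x
  have hy := hxy s hs hx
  obtain ⟨_, ⟨w, rfl⟩, hsw⟩ := href s hs
  exact ⟨((hsw hx).trans (hsw hy).symm).nodeLabel_eq,
    fun _ => hst.exists_edge_of_mem hs hx hy, fun _ => hst.exists_edge_of_mem hs hy hx⟩

theorem isKPartition_iff [Finite V] {k : ℕ} {I : Set (Set V)} :
    IsKPartition G k I ↔ I = (kbisimSetoid G k).classes := by
  induction k generalizing I with
  | zero => rfl
  | succ k ih =>
    simp only [IsKPartition, ih, exists_eq_left]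
    have hclasses : Refines (kbisimSetoid G (k + 1)).classes (kbisimSetoid G k).classes ∧
        Stable G (kbisimSetoid G (k + 1)).classes (kbisimSetoid G k).classes :=
      ⟨Setoid.refines_classes_of_le (kbisimSetoid_succ_le k), stable_kbisimSetoid_succ k⟩
    constructor
    · rintro ⟨hI, ⟨href, hst⟩, hmin⟩
      have hle := mkClasses_le_kbisimSetoid_succ hI href hst
      have hcard := hmin _ (Setoid.isPartition_classes _) hclasses
      rw [← Setoid.classes_mkClasses I hI] at hcard ⊢
      rw [Setoid.eq_of_le_of_ncard_classes_le hle hcard]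
    · rintro rfl
      refine ⟨Setoid.isPartition_classes _, hclasses, fun I' hI' ⟨href, hst⟩ => ?_⟩
      rw [← Setoid.classes_mkClasses I' hI']
      exact Setoid.ncard_classes_le_of_le (mkClasses_le_kbisimSetoid_succ hI' href hst)

end Bisimilarity

/-- For a graph with finitely many nodes and every `k ≥ 0`, all
nodes `u, v` are Paige-Tarjan `k`-bisimilar iff `u ≈^k v`. -/
theorem ptBisim_iff_kbisim [Fintype V] (G : LGraph V LN LE) (k : ℕ)
    (u v : V) : ptBisim G k u v ↔ kbisim G k u v := by
  simp only [ptBisim, isKPartition_iff, exists_eq_left]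
  exact ((kbisimSetoid G k).rel_iff_exists_classes).symm
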